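/- arXiv:2204.11148 — 4 statements merged into one kernel-verified Lean document; each statement's English description precedes it below -/
import Mathlib

section
/- Let x* be a feasible solution to the offline problem with demand bounds n ∈ ℕ^k and past accepted counts y ∈ ℕ^k, and set x := y + x*. Then x* is locally optimal at j if and only if both of the following hold: (i) x*_j = n_j, or P[S(x) ≥ B] > q_j; and (ii) x*_j = 0, or P[S(x − e_j) ≥ B] ≤ q_j. -/
open Finset

/-- PMF of a Binomial(m, p) random variable at value `s`. -/
noncomputable def binomPMF (p : ℝ) (m s : ℕ) : ℝ :=
  (m.choose s : ℝ) * p ^ s * (1 - p) ^ (m - s)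

/-- Expectation of `g` applied to a vector of independent binomial random variables,
where coordinate `j` is Binomial(x j, p j). -/
noncomputable def jointExp {k : ℕ} (p : Fin k → ℝ) (x : Fin k → ℕ)
    (g : (Fin k → ℕ) → ℝ) : ℝ :=
  ∑ a ∈ Fintype.piFinset (fun j => Finset.range (x j + 1)),
    (∏ j, binomPMF (p j) (x j) (a j)) * g a

open Classical in
/-- Probability of the event `E` for a vector of independent binomial random
variables, coordinate `j` being Binomial(x j, p j). -/
noncomputable def jointProb {k : ℕ} (p : Fin k → ℝ) (x : Fin k → ℕ)
    (E : (Fin k → ℕ) → Prop) : ℝ :=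
  jointExp p x (fun a => if E a then 1 else 0)

/-- P[S(x) ≥ B], where S(x) = Σ_j X_{j, x_j} is Poisson binomial. -/
noncomputable def showTail {k : ℕ} (p : Fin k → ℝ) (x : Fin k → ℕ) (B : ℕ) : ℝ :=
  jointProb p x (fun a => B ≤ ∑ j, a j)

/-- Expected compensation V_B(x) = E[(S(x) − B)^+]. -/
noncomputable def VB {k : ℕ} (p : Fin k → ℝ) (B : ℕ) (x : Fin k → ℕ) : ℝ :=
  jointExp p x (fun a => max ((∑ j, a j : ℝ) - B) 0)

/-- Objective of the offline problem with past accepted counts `y`: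
f(x) = Σ_j v_j (y_j + x_j) − V_B(y + x). -/
noncomputable def objFn {k : ℕ} (v p : Fin k → ℝ) (B : ℕ) (y x : Fin k → ℕ) : ℝ :=
  ∑ j, v j * ((y j : ℝ) + (x j : ℝ)) - VB p B (fun j => y j + x j)

/-- Feasibility for the offline problem with demand bounds `n`. -/
def Feasible {k : ℕ} (n x : Fin k → ℕ) : Prop := ∀ j, x j ≤ n j

/-- `x` is locally optimal at `j`: `x j` is the largest element of the argmax,
over `z ∈ {0,…,n j}`, of `z · v_j − V_B(y + x + (z − x_j)·e_j)`. -/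
def LocallyOpt {k : ℕ} (v p : Fin k → ℝ) (B : ℕ) (n y : Fin k → ℕ)
    (x : Fin k → ℕ) (j : Fin k) : Prop :=
  ∀ z ≤ n j,
    ((z : ℝ) * v j - VB p B (fun i => y i + Function.update x j z i)
        ≤ (x j : ℝ) * v j - VB p B (fun i => y i + x i)) ∧
    (x j < z →
      (z : ℝ) * v j - VB p B (fun i => y i + Function.update x j z i)
        < (x j : ℝ) * v j - VB p B (fun i => y i + x i))

lemma sum_piFinset_split {k : ℕ} (t : Fin k → Finset ℕ) (j : Fin k)
    (F : (Fin k → ℕ) → ℝ) :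
    ∑ a ∈ Fintype.piFinset t, F a
      = ∑ c ∈ t j, ∑ a ∈ Fintype.piFinset (Function.update t j {0}),
          F (Function.update a j c) := by
  rw [← Finset.sum_product']
  refine Finset.sum_bij' (fun a _ => (a j, Function.update a j 0))
    (fun q _ => Function.update q.2 j q.1) ?_ ?_ ?_ ?_ ?_
  · intro a ha
    rw [Finset.mem_product]
    refine ⟨Fintype.mem_piFinset.1 ha j, Fintype.mem_piFinset.2 fun i => ?_⟩
    by_cases hij : i = j
    · subst hij; simp
    · simp [Function.update_of_ne hij, Fintype.mem_piFinset.1 ha i]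
  · intro q hq
    rw [Finset.mem_product] at hq
    refine Fintype.mem_piFinset.2 fun i => ?_
    by_cases hij : i = j
    · subst hij; simpa using hq.1
    · have := Fintype.mem_piFinset.1 hq.2 i
      simpa [Function.update_of_ne hij] using this
  · intro a ha
    simp [Function.update_idem, Function.update_eq_self]
  · intro q hq
    rw [Finset.mem_product] at hq
    have h0 : q.2 j = 0 := by simpa using Fintype.mem_piFinset.1 hq.2 j
    have h2 : Function.update (Function.update q.2 j q.1) j 0 = q.2 := by
      rw [Function.update_idem, ← h0, Function.update_eq_self]
    simp [h2]
  · intro a ha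
    simp [Function.update_idem, Function.update_eq_self]

lemma binomPMF_pascal (p : ℝ) (m t : ℕ) (ht : t ≤ m) :
    binomPMF p (m+1) (t+1) = p * binomPMF p m t + (1-p) * binomPMF p m (t+1) := by
  rcases eq_or_lt_of_le ht with rfl | hlt
  · simp [binomPMF, Nat.choose_succ_self, Nat.choose_self]; ring
  · unfold binomPMF
    rw [Nat.choose_succ_succ m t]
    obtain ⟨s, hs⟩ : ∃ s, m - (t+1) = s := ⟨_, rfl⟩
    have h1 : m - t = s + 1 := by omega
    have h2 : m + 1 - (t + 1) = s + 1 := by omega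
    rw [hs, h1, h2]
    push_cast
    ring

lemma binom_step (p : ℝ) (m : ℕ) (h : ℕ → ℝ) :
    ∑ c ∈ range (m+2), binomPMF p (m+1) c * h c
      = p * ∑ c ∈ range (m+1), binomPMF p m c * h (c+1)
        + (1-p) * ∑ c ∈ range (m+1), binomPMF p m c * h c := by
  rw [Finset.sum_range_succ' (fun c => binomPMF p (m+1) c * h c) (m+1)]
  have hre : ∀ t ∈ range (m+1), binomPMF p (m+1) (t+1) * h (t+1)
      = p * (binomPMF p m t * h (t+1)) + (1-p) * (binomPMF p m (t+1) * h (t+1)) := by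
    intro t ht
    rw [binomPMF_pascal p m t (by simpa using Nat.lt_succ_iff.1 (mem_range.1 ht))]
    ring
  rw [Finset.sum_congr rfl hre, Finset.sum_add_distrib, ← Finset.mul_sum, ← Finset.mul_sum]
  have hz : binomPMF p (m+1) 0 = (1-p) * binomPMF p m 0 := by
    simp [binomPMF]; ring
  rw [Finset.sum_range_succ' (fun c => binomPMF p m c * h c) m]
  have hlast : ∑ t ∈ range (m+1), binomPMF p m (t+1) * h (t+1)
      = ∑ t ∈ range m, binomPMF p m (t+1) * h (t+1) := by
    rw [Finset.sum_range_succ]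
    simp [binomPMF, Nat.choose_succ_self]
  rw [hlast, hz]
  ring

section
variable {k : ℕ} (p : Fin k → ℝ) (x : Fin k → ℕ) (j : Fin k)

lemma jointExp_update (m : ℕ) (g : (Fin k → ℕ) → ℝ) :
    jointExp p (Function.update x j m) g
      = ∑ c ∈ range (m+1), binomPMF (p j) m c *
          ∑ a ∈ Fintype.piFinset (Function.update (fun i => range (x i + 1)) j {0}),
            (∏ i ∈ Finset.univ.erase j, binomPMF (p i) (x i) (a i)) *
              g (Function.update a j c) := by
  unfold jointExp
  have ht : (fun i => range (Function.update x j m i + 1))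
      = Function.update (fun i => range (x i + 1)) j (range (m+1)) := by
    funext i
    by_cases hij : i = j
    · subst hij; simp
    · simp [Function.update_of_ne hij]
  rw [ht, sum_piFinset_split _ j]
  have hu : Function.update (Function.update (fun i => range (x i + 1)) j (range (m+1))) j
      ({0} : Finset ℕ) = Function.update (fun i => range (x i + 1)) j {0} :=
    Function.update_idem ..
  rw [Function.update_self, hu]
  refine Finset.sum_congr rfl fun c _ => ?_
  rw [Finset.mul_sum]
  refine Finset.sum_congr rfl fun a _ => ?_
  have hprod : (∏ i, binomPMF (p i) (Function.update x j m i) (Function.update a j c i))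
      = binomPMF (p j) m c * ∏ i ∈ Finset.univ.erase j, binomPMF (p i) (x i) (a i) := by
    rw [← Finset.mul_prod_erase Finset.univ _ (Finset.mem_univ j)]
    congr 1
    · simp
    · refine Finset.prod_congr rfl fun i hi => ?_
      have hij : i ≠ j := (Finset.mem_erase.1 hi).1
      rw [Function.update_of_ne hij, Function.update_of_ne hij]
  rw [hprod]; ring

lemma jointExp_succ (m : ℕ) (g : (Fin k → ℕ) → ℝ) :
    jointExp p (Function.update x j (m+1)) g
      = p j * jointExp p (Function.update x j m)
            (fun a => g (Function.update a j (a j + 1)))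
        + (1 - p j) * jointExp p (Function.update x j m) g := by
  rw [jointExp_update p x j (m+1) g, jointExp_update p x j m g,
    jointExp_update p x j m (fun a => g (Function.update a j (a j + 1)))]
  have hsh : ∀ c : ℕ, ∀ a : Fin k → ℕ,
      (fun a => g (Function.update a j (a j + 1))) (Function.update a j c)
        = g (Function.update a j (c+1)) := by
    intro c a
    simp [Function.update_idem]
  simp only [hsh]
  exact binom_step (p j) m _
end

section
variable {k : ℕ} (p : Fin k → ℝ) (x : Fin k → ℕ) (j : Fin k) (B : ℕ)

lemma showTail_eq (u : Fin k → ℕ) :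
    showTail p u B = jointExp p u (fun a => if B ≤ ∑ i, a i then 1 else 0) := by
  unfold showTail jointProb jointExp
  refine Finset.sum_congr rfl fun a _ => ?_
  by_cases h : B ≤ ∑ i, a i <;> simp [h]

lemma sum_update_succ' (a : Fin k → ℕ) :
    ∑ i, Function.update a j (a j + 1) i = (∑ i, a i) + 1 := by
  rw [Finset.sum_update_of_mem (Finset.mem_univ j)]
  have := Finset.add_sum_erase Finset.univ a (Finset.mem_univ j)
  rw [Finset.sdiff_singleton_eq_erase]
  omega

lemma jointExp_add (u : Fin k → ℕ) (g1 g2 : (Fin k → ℕ) → ℝ) :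
    jointExp p u (fun a => g1 a + g2 a) = jointExp p u g1 + jointExp p u g2 := by
  unfold jointExp
  rw [← Finset.sum_add_distrib]
  exact Finset.sum_congr rfl fun a _ => by ring

lemma binomPMF_nonneg {q : ℝ} (h0 : 0 ≤ q) (h1 : q ≤ 1) (m s : ℕ) :
    0 ≤ binomPMF q m s := by
  unfold binomPMF
  have : (0:ℝ) ≤ 1 - q := by linarith
  positivity

lemma jointExp_mono (hp : ∀ i, 0 ≤ p i ∧ p i ≤ 1) (u : Fin k → ℕ)
    (g1 g2 : (Fin k → ℕ) → ℝ) (h : ∀ a, g1 a ≤ g2 a) :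
    jointExp p u g1 ≤ jointExp p u g2 := by
  refine Finset.sum_le_sum fun a _ => ?_
  refine mul_le_mul_of_nonneg_left (h a) ?_
  exact Finset.prod_nonneg fun i _ => binomPMF_nonneg (hp i).1 (hp i).2 _ _

lemma max_shift (t B : ℕ) :
    max (((t:ℝ) + 1) - B) 0
      = max ((t:ℝ) - B) 0 + (if B ≤ t then 1 else 0) := by
  by_cases h : B ≤ t
  · have h1 : (B:ℝ) ≤ t := by exact_mod_cast h
    rw [if_pos h, max_eq_left (by linarith), max_eq_left (by linarith)]
    ring
  · have h1 : (t:ℝ) + 1 ≤ B := by exact_mod_cast Nat.succ_le_of_lt (Nat.lt_of_not_le h)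
    rw [if_neg h, max_eq_right (by linarith), max_eq_right (by linarith)]
    ring

lemma VB_succ (m : ℕ) :
    VB p B (Function.update x j (m+1))
      = VB p B (Function.update x j m)
        + p j * showTail p (Function.update x j m) B := by
  unfold VB
  rw [jointExp_succ]
  have hsh : (fun a : Fin k → ℕ =>
      max ((∑ i, Function.update a j (a j + 1) i : ℝ) - B) 0)
      = fun a => max ((∑ i, a i : ℝ) - B) 0 + (if B ≤ ∑ i, a i then 1 else 0) := by
    funext a
    have e1 : (∑ i, (Function.update a j (a j + 1) i : ℝ))
        = (((∑ i, Function.update a j (a j + 1) i : ℕ)) : ℝ) := (Nat.cast_sum ..).symm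
    have e2 : (∑ i, (a i : ℝ)) = ((∑ i, a i : ℕ) : ℝ) := (Nat.cast_sum ..).symm
    rw [e1, e2, sum_update_succ' j a, Nat.cast_add, Nat.cast_one]
    exact max_shift _ _
  rw [hsh, jointExp_add, ← showTail_eq]
  ring

lemma showTail_succ_ge (hp : ∀ i, 0 ≤ p i ∧ p i ≤ 1) (m : ℕ) :
    showTail p (Function.update x j m) B
      ≤ showTail p (Function.update x j (m+1)) B := by
  rw [showTail_eq, showTail_eq, jointExp_succ]
  have hmono : jointExp p (Function.update x j m)
        (fun a => if B ≤ ∑ i, a i then 1 else 0)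
      ≤ jointExp p (Function.update x j m)
        (fun a => if B ≤ ∑ i, Function.update a j (a j + 1) i then 1 else 0) := by
    refine jointExp_mono p hp _ _ _ fun a => ?_
    rw [sum_update_succ' j a]
    by_cases h : B ≤ ∑ i, a i
    · rw [if_pos h, if_pos (by omega)]
    · rw [if_neg h]; split <;> norm_num
  nlinarith [(hp j).1, (hp j).2]
end

lemma mono_upto (G : ℕ → ℝ) (b : ℕ) (h : ∀ w, w < b → G w ≤ G (w+1)) :
    ∀ z, z ≤ b → G z ≤ G b := by
  induction b with
  | zero => intro z hz; simp [Nat.le_zero.1 hz]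
  | succ b ih =>
    intro z hz
    rcases eq_or_lt_of_le hz with rfl | hlt
    · exact le_refl _
    · exact (ih (fun w hw => h w (hw.trans (Nat.lt_succ_self b))) z (by omega)).trans
        (h b (Nat.lt_succ_self b))

lemma strict_above (G : ℕ → ℝ) (a : ℕ) (h : ∀ w, a ≤ w → G (w+1) < G w) :
    ∀ z, a < z → G z < G a := by
  intro z hz
  induction z, hz using Nat.le_induction with
  | base => exact h a (le_refl a)
  | succ w hw ih => exact (h w (by omega)).trans ih


/-- **Lemma 1 (local optimality conditions).**  For a feasible solution `xs` of the
offline problem with demand bounds `n` and past accepted counts `y`, setting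
`x := y + xs`, `xs` is locally optimal at `j` iff
(i) `xs j = n j` or `P[S(x) ≥ B] > q_j`, and
(ii) `xs j = 0` or `P[S(x − e_j) ≥ B] ≤ q_j`, where `q_j = v j / p j`. -/
theorem local_optimality_characterization {k : ℕ} (v p : Fin k → ℝ)
    (hk : 1 ≤ k)
    (hp : ∀ j, 0 < p j ∧ p j < 1)
    (hrat : ∀ j, ∃ q : ℚ, p j = (q : ℝ))
    (hv : ∀ j, 0 < v j ∧ v j < p j)
    (hord : ∀ i j : Fin k, i ≤ j → v j / p j ≤ v i / p i)
    (htie : ∀ i j : Fin k, i < j → v i / p i = v j / p j → v j < v i ∧ p j < p i)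
    (B : ℕ) (n y xs : Fin k → ℕ) (hfeas : Feasible n xs) (j : Fin k) :
    LocallyOpt v p B n y xs j ↔
      ((xs j = n j ∨ v j / p j < showTail p (fun i => y i + xs i) B) ∧
       (xs j = 0 ∨
        showTail p (fun i => (y i + xs i) - (if i = j then 1 else 0)) B ≤ v j / p j)) := by
  have hpj : 0 < p j := (hp j).1
  have hp01 : ∀ i, 0 ≤ p i ∧ p i ≤ 1 := fun i => ⟨(hp i).1.le, (hp i).2.le⟩
  set x : Fin k → ℕ := fun i => y i + xs i with hxdef
  set T : ℕ → ℝ := fun z => showTail p (Function.update x j (y j + z)) B with hTdef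
  set G : ℕ → ℝ := fun z => (z : ℝ) * v j - VB p B (Function.update x j (y j + z))
    with hGdef
  -- x with coordinate j updated
  have hxu : ∀ z : ℕ, (fun i => y i + Function.update xs j z i)
      = Function.update x j (y j + z) := by
    intro z
    funext i
    by_cases hij : i = j
    · subst hij; simp [hxdef]
    · simp [Function.update_of_ne hij, hxdef]
  have hxself : Function.update x j (y j + xs j) = x := by
    have : y j + xs j = x j := rfl
    rw [this, Function.update_eq_self]
  -- the locally-opt predicate in terms of G
  have hloc : LocallyOpt v p B n y xs j ↔
      ∀ z ≤ n j, (G z ≤ G (xs j) ∧ (xs j < z → G z < G (xs j))) := by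
    unfold LocallyOpt
    constructor
    · intro h z hz
      have h' := h z hz
      rw [hGdef]
      simp only
      rw [hxself, ← hxu z]
      exact h'
    · intro h z hz
      have h' := h z hz
      rw [hGdef] at h'
      simp only at h'
      rw [hxself, ← hxu z] at h'
      exact h'
  -- step identity
  have hstep : ∀ z : ℕ, G (z+1) = G z + (v j - p j * T z) := by
    intro z
    have hy : y j + (z + 1) = (y j + z) + 1 := rfl
    rw [hGdef, hTdef]
    simp only
    rw [hy, VB_succ p x j B (y j + z)]
    push_cast
    ring
  -- T monotone
  have hTmono : ∀ z w : ℕ, z ≤ w → T z ≤ T w := by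
    intro z w hzw
    induction w, hzw using Nat.le_induction with
    | base => exact le_refl _
    | succ w hw ih =>
      refine ih.trans ?_
      have hy : y j + (w + 1) = (y j + w) + 1 := rfl
      rw [hTdef]
      simp only
      rw [hy]
      exact showTail_succ_ge p x j B hp01 (y j + w)
  -- identification of tails
  have hT1 : T (xs j) = showTail p x B := by rw [hTdef]; simp only [hxself]
  have hT2 : xs j ≠ 0 →
      T (xs j - 1) = showTail p (fun i => (y i + xs i) - (if i = j then 1 else 0)) B := by
    intro h0
    rw [hTdef]
    simp only
    congr 1
    funext i
    by_cases hij : i = j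
    · subst hij; simp [hxdef]; omega
    · simp [Function.update_of_ne hij, hxdef, hij]
  rw [hloc]
  constructor
  · intro h
    constructor
    · by_cases hn : xs j = n j
      · exact Or.inl hn
      · right
        have hlt : xs j < n j := lt_of_le_of_ne (hfeas j) hn
        have h1 := (h (xs j + 1) hlt).2 (Nat.lt_succ_self _)
        have h2 := hstep (xs j)
        have h3 : v j - p j * T (xs j) < 0 := by linarith
        rw [← hT1]
        rw [div_lt_iff₀ hpj]
        linarith
    · by_cases h0 : xs j = 0
      · exact Or.inl h0
      · right
        obtain ⟨m, hm⟩ : ∃ m, xs j = m + 1 := ⟨xs j - 1, by omega⟩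
        have hmn : m ≤ n j := by have := hfeas j; omega
        have h1 := (h m hmn).1
        have h2 := hstep m
        rw [← hm] at h2
        have h3 : 0 ≤ v j - p j * T m := by linarith
        rw [← hT2 h0]
        have hmx : xs j - 1 = m := by omega
        rw [hmx, le_div_iff₀ hpj]
        linarith
  · rintro ⟨hi, hii⟩ z hz
    have key1 : xs j < z → G z < G (xs j) := by
      intro hlt
      have hn : xs j ≠ n j := by omega
      have hq : v j / p j < T (xs j) := by
        rcases hi with h | h
        · exact absurd h hn
        · rwa [hT1]
      have hD : v j - p j * T (xs j) < 0 := by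
        rw [div_lt_iff₀ hpj] at hq
        linarith
      refine strict_above G (xs j) (fun w hw => ?_) z hlt
      have h2 := hstep w
      have h3 : T (xs j) ≤ T w := hTmono _ _ hw
      nlinarith
    have key2 : z ≤ xs j → G z ≤ G (xs j) := by
      intro hle
      by_cases h0 : xs j = 0
      · have : z = 0 := by omega
        rw [this, h0]
      · have hq : T (xs j - 1) ≤ v j / p j := by
          rcases hii with h | h
          · exact absurd h h0
          · rwa [hT2 h0]
        refine mono_upto G (xs j) (fun w hw => ?_) z hle
        have h2 := hstep w
        have h3 : T w ≤ T (xs j - 1) := hTmono _ _ (by omega)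
        rw [le_div_iff₀ hpj] at hq
        nlinarith
    constructor
    · rcases lt_trichotomy z (xs j) with hlt | heq | hgt
      · exact key2 hlt.le
      · rw [heq]
      · exact (key1 hgt).le
    · exact key1
end

section
/- Fix a type j (so 0 < q̄_j := 1 − v_j/p_j < 1). There exist constants δ* ∈ ℕ and m0 ∈ ℕ, depending only on j, k, (v_1,...,v_k), (p_1,...,p_k), such that for every x ∈ ℕ^k with Σ_{n=1}^k x_n ≥ m0, setting Z := S(x) and Y := S(x + δ*·e_j), the generalized inverse CDFs satisfy F_Y^{-1}(q̄_j) − F_Z^{-1}(q̄_j) ≥ 1, where for an integer-valued random variable X one defines F_X^{-1}(q) := min{ t ∈ ℤ : P[X ≤ t] ≥ q }. -/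
/-!
Let `t` be the `q̄`-quantile of `Z = S(x)`, so `P[Z ≤ t - 1] < q̄ ≤ P[Z ≤ t]`, and let
`Y = Z + B` with `B ~ Bin(δ, p_j)` independent, `bᵢ = P[B = i]`. Splitting according to
`B = 0`, `B = 1`, `B ≥ 2`,
`P[Y ≤ t] ≤ P[Z ≤ t - 1] + b₀ P[Z = t] - (1 - b₀ - b₁) P[Z = t - 1]`.
Take `δ` with `b₀ + b₁ ≤ q̄ / 8`. If `P[Z = t - 1] ≥ (q̄ / 4) P[Z = t]`, the correction term is
nonpositive. Otherwise the pmf of `Z` is log-concave (its generating polynomial is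
`∏ (p_i X + 1 - p_i) ^ x_i`), so the ratio bound `P[Z = s - 1] ≤ (q̄ / 4) P[Z = s]` propagates to
every `s ≤ t` and gives `P[Z ≤ t - 1] ≤ q̄ / 4`, whence `P[Y ≤ t] ≤ q̄ / 4 + q̄ / 8`. Either way
`P[Y ≤ t] < q̄`, so the quantile of `Y` exceeds `t`, for every `x`: one may take `m0 = 0`.
-/

open Finset

/-- CDF of the Poisson binomial `S(x) = Σ_j X_{j,x_j}` at an integer `t`. -/
noncomputable def pbCDF {k : ℕ} (p : Fin k → ℝ) (x : Fin k → ℕ) (t : ℤ) : ℝ :=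
  jointProb p x (fun a => (∑ j, (a j : ℤ)) ≤ t)

/-- Generalized inverse CDF (quantile) of the Poisson binomial `S(x)`:
the least integer `t` with `P[S(x) ≤ t] ≥ q`. -/
noncomputable def pbQuantile {k : ℕ} (p : Fin k → ℝ) (x : Fin k → ℕ) (q : ℝ) : ℤ :=
  sInf {t : ℤ | q ≤ pbCDF p x t}


open Polynomial Filter Topology

lemma binomPMF_nonneg_s8 {p : ℝ} (hp : p ∈ Set.Icc (0 : ℝ) 1) (m s : ℕ) :
    0 ≤ binomPMF p m s :=
  mul_nonneg (mul_nonneg (Nat.cast_nonneg _) (pow_nonneg hp.1 _)) (pow_nonneg (sub_nonneg.2 hp.2) _)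

lemma C_mul_X_add_C_pow_eq_sum_binomPMF (p : ℝ) (m : ℕ) :
    (C p * X + C (1 - p)) ^ m = ∑ s ∈ range (m + 1), C (binomPMF p m s) * X ^ s := by
  rw [add_pow]
  refine sum_congr rfl fun s _ => ?_
  simp only [binomPMF, mul_pow, ← C_pow, ← map_natCast C, map_mul]
  ring

lemma sum_binomPMF (p : ℝ) (m : ℕ) : ∑ s ∈ range (m + 1), binomPMF p m s = 1 := by
  simpa [eval_finsetSum] using (congrArg (eval 1) (C_mul_X_add_C_pow_eq_sum_binomPMF p m)).symm

lemma tendsto_binomPMF_zero_add_one {p : ℝ} (hp0 : 0 < p) (hp1 : p ≤ 1) :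
    Tendsto (fun d => binomPMF p (d + 1) 0 + binomPMF p (d + 1) 1) atTop (𝓝 0) := by
  have hr0 : 0 ≤ 1 - p := sub_nonneg.2 hp1
  have hr1 : 1 - p < 1 := by linarith
  have hpow := tendsto_pow_atTop_nhds_zero_of_lt_one hr0 hr1
  have hlin := tendsto_self_mul_const_pow_of_lt_one hr0 hr1
  convert ((hpow.const_mul (1 - p)).add ((hlin.add hpow).const_mul p)) using 1
  · funext d
    simp only [binomPMF, Nat.choose_zero_right, Nat.choose_one_right, Nat.cast_one, Nat.cast_add,
      pow_zero, pow_one, mul_one, one_mul, tsub_zero, add_tsub_cancel_right]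
    ring
  · simp

/-- For nonnegative sequences this is log-concavity together with the absence of internal zeros;
in this form it is preserved by convolution with a Bernoulli law without any positivity
bookkeeping. -/
def IsLogConcaveSeq (f : ℤ → ℝ) : Prop :=
  ∀ a b : ℤ, a ≤ b → f (a - 1) * f (b + 1) ≤ f a * f b

lemma IsLogConcaveSeq.convolve_bernoulli {f : ℤ → ℝ} (hf : IsLogConcaveSeq f) {p : ℝ}
    (hp : p ∈ Set.Icc (0 : ℝ) 1) : IsLogConcaveSeq fun t => (1 - p) * f t + p * f (t - 1) := by
  intro a b hab
  have outer := hf a b hab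
  have inner : f (a - 1 - 1) * f (b - 1 + 1) ≤ f (a - 1) * f (b - 1) := hf _ _ (by omega)
  have cross : f (a - 1 - 1) * f (b + 1) ≤ f a * f (b - 1) := by
    have h := hf (a - 1) b (by omega)
    obtain rfl | hlt := hab.eq_or_lt
    · simpa [mul_comm (f a)] using h
    · exact h.trans (by simpa using hf a (b - 1) (by omega))
  simp only [sub_add_cancel, add_sub_cancel_right] at inner ⊢
  nlinarith [mul_le_mul_of_nonneg_left outer (sq_nonneg (1 - p)),
    mul_le_mul_of_nonneg_left inner (sq_nonneg p),
    mul_le_mul_of_nonneg_left cross (mul_nonneg hp.1 (sub_nonneg.2 hp.2))]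

lemma IsLogConcaveSeq.apply_sub_one_le_mul {f : ℤ → ℝ} (hf : IsLogConcaveSeq f)
    (hnn : ∀ s, 0 ≤ f s) {t : ℤ} (ht : 0 < f t) {ε : ℝ} (h : f (t - 1) ≤ ε * f t) :
    ∀ s ≤ t, f (s - 1) ≤ ε * f s := by
  intro s hs
  obtain rfl | hlt := hs.eq_or_lt
  · exact h
  have hratio : f (s - 1) * f t ≤ f s * f (t - 1) := by simpa using hf s (t - 1) (by omega)
  refine le_of_mul_le_mul_right ?_ ht
  nlinarith [mul_le_mul_of_nonneg_left h (hnn s)]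

section PoissonBinomial

variable {k : ℕ}

noncomputable def pbPMF (p : Fin k → ℝ) (x : Fin k → ℕ) (t : ℤ) : ℝ :=
  jointProb p x fun a => ∑ i, (a i : ℤ) = t

noncomputable def pbGenPoly (p : Fin k → ℝ) (x : Fin k → ℕ) : ℝ[X] :=
  ∏ i, (C (p i) * X + C (1 - p i)) ^ x i

lemma pbGenPoly_eq_sum (p : Fin k → ℝ) (x : Fin k → ℕ) :
    pbGenPoly p x = ∑ a ∈ Fintype.piFinset (fun i => range (x i + 1)),
      C (∏ i, binomPMF (p i) (x i) (a i)) * X ^ (∑ i, a i) := by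
  simp only [pbGenPoly, C_mul_X_add_C_pow_eq_sum_binomPMF, prod_univ_sum, prod_mul_distrib,
    map_prod, prod_pow_eq_pow_sum]

lemma pbGenPoly_add (p : Fin k → ℝ) (x y : Fin k → ℕ) :
    pbGenPoly p (x + y) = pbGenPoly p x * pbGenPoly p y := by
  simp only [pbGenPoly, Pi.add_apply, pow_add, prod_mul_distrib]

lemma pbGenPoly_single (p : Fin k → ℝ) (j : Fin k) (δ : ℕ) :
    pbGenPoly p (Pi.single j δ) = (C (p j) * X + C (1 - p j)) ^ δ := by
  rw [pbGenPoly, prod_eq_single j (fun i _ hi => by simp [hi]) (by simp)]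
  simp

lemma pbPMF_natCast (p : Fin k → ℝ) (x : Fin k → ℕ) (n : ℕ) :
    pbPMF p x n = (pbGenPoly p x).coeff n := by
  rw [pbGenPoly_eq_sum, finsetSum_coeff]
  refine sum_congr rfl fun a _ => ?_
  simp only [coeff_C_mul_X_pow, ← Nat.cast_sum, Nat.cast_inj, eq_comm (a := n)]
  split_ifs <;> simp

lemma pbPMF_of_neg (p : Fin k → ℝ) (x : Fin k → ℕ) {t : ℤ} (ht : t < 0) : pbPMF p x t = 0 := by
  refine sum_eq_zero fun a _ => ?_
  have : ¬ ∑ i, (a i : ℤ) = t := by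
    have : (0 : ℤ) ≤ ∑ i, (a i : ℤ) := sum_nonneg fun i _ => Int.natCast_nonneg _
    omega
  simp [this]

lemma pbPMF_zero (p : Fin k → ℝ) (t : ℤ) : pbPMF p 0 t = if t = 0 then 1 else 0 := by
  rcases lt_or_ge t 0 with ht | ht
  · rw [pbPMF_of_neg p 0 ht, if_neg ht.ne]
  · lift t to ℕ using ht
    simp [pbPMF_natCast, pbGenPoly, coeff_one]

lemma pbPMF_add_single (p : Fin k → ℝ) (x : Fin k → ℕ) (j : Fin k) (δ : ℕ) (t : ℤ) :
    pbPMF p (x + Pi.single j δ) t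
      = ∑ i ∈ range (δ + 1), binomPMF (p j) δ i * pbPMF p x (t - i) := by
  rcases lt_or_ge t 0 with ht | ht
  · rw [pbPMF_of_neg _ _ ht]
    exact (sum_eq_zero fun i _ => by rw [pbPMF_of_neg _ _ (by omega), mul_zero]).symm
  lift t to ℕ using ht
  rw [pbPMF_natCast, pbGenPoly_add, pbGenPoly_single, C_mul_X_add_C_pow_eq_sum_binomPMF,
    mul_sum, finsetSum_coeff]
  refine sum_congr rfl fun i _ => ?_
  rw [mul_left_comm, coeff_C_mul, coeff_mul_X_pow']
  split_ifs with hi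
  · rw [← Nat.cast_sub hi, pbPMF_natCast]
  · rw [pbPMF_of_neg _ _ (by omega), mul_zero]

lemma jointProb_nonneg {p : Fin k → ℝ} (hp : ∀ i, p i ∈ Set.Icc (0 : ℝ) 1)
    (x : Fin k → ℕ) (E : (Fin k → ℕ) → Prop) : 0 ≤ jointProb p x E :=
  sum_nonneg fun _ _ =>
    mul_nonneg (prod_nonneg fun i _ => binomPMF_nonneg_s8 (hp i) _ _)
      (by dsimp only; split_ifs <;> norm_num)

lemma jointProb_mono {p : Fin k → ℝ} (hp : ∀ i, p i ∈ Set.Icc (0 : ℝ) 1)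
    (x : Fin k → ℕ) {E E' : (Fin k → ℕ) → Prop} (h : ∀ a, E a → E' a) :
    jointProb p x E ≤ jointProb p x E' :=
  sum_le_sum fun a _ => mul_le_mul_of_nonneg_left
    (by dsimp only; split_ifs with hE hE' <;> first | exact absurd (h a hE) hE' | norm_num)
    (prod_nonneg fun i _ => binomPMF_nonneg_s8 (hp i) _ _)

lemma pbPMF_nonneg {p : Fin k → ℝ} (hp : ∀ i, p i ∈ Set.Icc (0 : ℝ) 1)
    (x : Fin k → ℕ) (t : ℤ) : 0 ≤ pbPMF p x t :=
  jointProb_nonneg hp x _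

lemma pbCDF_mono {p : Fin k → ℝ} (hp : ∀ i, p i ∈ Set.Icc (0 : ℝ) 1)
    (x : Fin k → ℕ) {t u : ℤ} (htu : t ≤ u) : pbCDF p x t ≤ pbCDF p x u :=
  jointProb_mono hp x fun _ ha => ha.trans htu

lemma pbCDF_of_neg (p : Fin k → ℝ) (x : Fin k → ℕ) {t : ℤ} (ht : t < 0) : pbCDF p x t = 0 := by
  refine sum_eq_zero fun a _ => ?_
  have : ¬ ∑ i, (a i : ℤ) ≤ t := by
    have : (0 : ℤ) ≤ ∑ i, (a i : ℤ) := sum_nonneg fun i _ => Int.natCast_nonneg _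
    omega
  simp [this]

lemma pbCDF_of_ge (p : Fin k → ℝ) (x : Fin k → ℕ) {t : ℤ} (ht : ∑ i, (x i : ℤ) ≤ t) :
    pbCDF p x t = 1 := by
  have hmem : ∀ a ∈ Fintype.piFinset fun i => range (x i + 1), ∑ i, (a i : ℤ) ≤ t := by
    intro a ha
    refine le_trans (sum_le_sum fun i _ => ?_) ht
    have := Fintype.mem_piFinset.1 ha i
    simp only [mem_range] at this
    omega
  rw [pbCDF, jointProb, jointExp, sum_congr rfl fun a ha => by rw [if_pos (hmem a ha), mul_one],
    ← prod_univ_sum]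
  exact prod_eq_one fun i _ => sum_binomPMF _ _

lemma pbCDF_le_one {p : Fin k → ℝ} (hp : ∀ i, p i ∈ Set.Icc (0 : ℝ) 1)
    (x : Fin k → ℕ) (t : ℤ) : pbCDF p x t ≤ 1 :=
  (pbCDF_mono hp x (le_max_left t (∑ i, (x i : ℤ)))).trans_eq
    (pbCDF_of_ge p x (le_max_right _ _))

lemma pbCDF_sub_one_add_pbPMF (p : Fin k → ℝ) (x : Fin k → ℕ) (t : ℤ) :
    pbCDF p x (t - 1) + pbPMF p x t = pbCDF p x t := by
  simp only [pbCDF, pbPMF, jointProb, jointExp, ← sum_add_distrib, ← mul_add]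
  refine sum_congr rfl fun a _ => ?_
  congr 1
  split_ifs <;> first | omega | norm_num

lemma pbPMF_add_single_one (p : Fin k → ℝ) (x : Fin k → ℕ) (j : Fin k) (t : ℤ) :
    pbPMF p (x + Pi.single j 1) t = (1 - p j) * pbPMF p x t + p j * pbPMF p x (t - 1) := by
  simp [pbPMF_add_single, sum_range_succ, binomPMF]

lemma pbPMF_isLogConcaveSeq {p : Fin k → ℝ} (hp : ∀ i, p i ∈ Set.Icc (0 : ℝ) 1)
    (x : Fin k → ℕ) : IsLogConcaveSeq (pbPMF p x) := by
  suffices h : ∀ y, IsLogConcaveSeq (pbPMF p y) → IsLogConcaveSeq (pbPMF p (y + x)) by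
    refine zero_add x ▸ h 0 fun a b hab => ?_
    simp only [pbPMF_zero]
    split_ifs <;> first | omega | norm_num
  induction x using Pi.single_induction with
  | zero => simp
  | add x x' hx hx' => exact fun y hy => add_assoc y x x' ▸ hx' _ (hx y hy)
  | single j δ =>
    intro y hy
    induction δ with
    | zero => simpa using hy
    | succ δ ih =>
      rw [show y + Pi.single j (δ + 1) = y + Pi.single j δ + Pi.single j 1 by
        rw [add_assoc, ← Pi.single_add], funext (pbPMF_add_single_one p _ j)]
      exact ih.convolve_bernoulli (hp j)

lemma pbCDF_add_single (p : Fin k → ℝ) (x : Fin k → ℕ) (j : Fin k) (δ : ℕ) (t : ℤ) :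
    pbCDF p (x + Pi.single j δ) t
      = ∑ i ∈ range (δ + 1), binomPMF (p j) δ i * pbCDF p x (t - i) := by
  have hneg : ∀ t < 0, pbCDF p (x + Pi.single j δ) t
      = ∑ i ∈ range (δ + 1), binomPMF (p j) δ i * pbCDF p x (t - i) := fun t ht => by
    rw [pbCDF_of_neg _ _ ht]
    exact (sum_eq_zero fun i _ => by rw [pbCDF_of_neg _ _ (by omega), mul_zero]).symm
  rcases lt_or_ge t (-1) with ht | ht
  · exact hneg t (by omega)
  induction t, ht using Int.leInduction with
  | base => exact hneg _ (by norm_num)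
  | succ t _ ih =>
    rw [← pbCDF_sub_one_add_pbPMF, add_sub_cancel_right, ih, pbPMF_add_single, ← sum_add_distrib]
    refine sum_congr rfl fun i _ => ?_
    rw [← mul_add, ← pbCDF_sub_one_add_pbPMF p x (t + 1 - i), sub_right_comm, add_sub_cancel_right]

lemma pbCDF_add_single_succ_le {p : Fin k → ℝ} (hp : ∀ i, p i ∈ Set.Icc (0 : ℝ) 1)
    (x : Fin k → ℕ) (j : Fin k) (d : ℕ) (t : ℤ) :
    pbCDF p (x + Pi.single j (d + 1)) t
      ≤ binomPMF (p j) (d + 1) 0 * pbCDF p x t + binomPMF (p j) (d + 1) 1 * pbCDF p x (t - 1)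
        + (1 - binomPMF (p j) (d + 1) 0 - binomPMF (p j) (d + 1) 1) * pbCDF p x (t - 2) := by
  have htail : ∑ i ∈ range d, binomPMF (p j) (d + 1) (i + 2)
      = 1 - binomPMF (p j) (d + 1) 0 - binomPMF (p j) (d + 1) 1 := by
    rw [← sum_binomPMF (p j) (d + 1), sum_range_succ', sum_range_succ']
    ring
  have hbound : ∀ i ∈ range d, binomPMF (p j) (d + 1) (i + 1 + 1) * pbCDF p x (t - ↑(i + 1 + 1))
      ≤ binomPMF (p j) (d + 1) (i + 2) * pbCDF p x (t - 2) := fun i _ =>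
    mul_le_mul_of_nonneg_left (pbCDF_mono hp x (by push_cast; omega)) (binomPMF_nonneg_s8 (hp j) _ _)
  rw [pbCDF_add_single, sum_range_succ', sum_range_succ', ← htail, sum_mul]
  simp only [zero_add, Nat.cast_zero, Nat.cast_one, sub_zero]
  linarith [sum_le_sum hbound]

lemma pbCDF_sub_one_le_mul {p : Fin k → ℝ} (hp : ∀ i, p i ∈ Set.Icc (0 : ℝ) 1)
    (x : Fin k → ℕ) {t : ℤ} (ht : 0 < pbPMF p x t) {ε : ℝ}
    (h : pbPMF p x (t - 1) ≤ ε * pbPMF p x t) :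
    pbCDF p x (t - 1) ≤ ε * pbCDF p x t := by
  have hpmf := (pbPMF_isLogConcaveSeq hp x).apply_sub_one_le_mul (pbPMF_nonneg hp x) ht h
  suffices ∀ u, -1 ≤ u → u ≤ t → pbCDF p x (u - 1) ≤ ε * pbCDF p x u from
    this t (by linarith [(pbPMF_of_neg p x).mt ht.ne']) le_rfl
  intro u hu
  induction u, hu using Int.leInduction with
  | base => simp [pbCDF_of_neg]
  | succ u _ ih =>
    intro hut
    have hstep := hpmf (u + 1) hut
    rw [add_sub_cancel_right] at hstep ⊢
    calc pbCDF p x u = pbCDF p x (u - 1) + pbPMF p x u := (pbCDF_sub_one_add_pbPMF p x u).symm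
      _ ≤ ε * pbCDF p x u + ε * pbPMF p x (u + 1) := add_le_add (ih (by omega)) hstep
      _ = ε * pbCDF p x (u + 1) := by
        rw [← pbCDF_sub_one_add_pbPMF p x (u + 1), add_sub_cancel_right, mul_add]

lemma pbCDF_add_single_lt {p : Fin k → ℝ} (hp : ∀ i, p i ∈ Set.Icc (0 : ℝ) 1)
    (x : Fin k → ℕ) (j : Fin k) {d : ℕ} {q : ℝ} (hq : 0 < q)
    (hd : binomPMF (p j) (d + 1) 0 + binomPMF (p j) (d + 1) 1 ≤ q / 8) {t : ℤ}
    (hlt : pbCDF p x (t - 1) < q) (hle : q ≤ pbCDF p x t) :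
    pbCDF p (x + Pi.single j (d + 1)) t < q := by
  set b₀ := binomPMF (p j) (d + 1) 0
  set b₁ := binomPMF (p j) (d + 1) 1
  have hb₀ : 0 ≤ b₀ := binomPMF_nonneg_s8 (hp j) _ _
  have hb₁ : 0 ≤ b₁ := binomPMF_nonneg_s8 (hp j) _ _
  have hsplit := pbCDF_sub_one_add_pbPMF p x t
  have hsplit' := pbCDF_sub_one_add_pbPMF p x (t - 1)
  rw [sub_sub, one_add_one_eq_two] at hsplit'
  have hG : pbCDF p (x + Pi.single j (d + 1)) t
      ≤ pbCDF p x (t - 1) + b₀ * pbPMF p x t - (1 - b₀ - b₁) * pbPMF p x (t - 1) :=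
    (pbCDF_add_single_succ_le hp x j d t).trans_eq (by rw [← hsplit, ← hsplit']; ring)
  have hq1 : q ≤ 1 := hle.trans (pbCDF_le_one hp x t)
  have hft : 0 < pbPMF p x t := by linarith
  have hF0 : 0 ≤ pbCDF p x (t - 1) := jointProb_nonneg hp x _
  have hft_le_one : pbPMF p x t ≤ 1 := by linarith [pbCDF_le_one hp x t]
  have hpred_nonneg : 0 ≤ pbPMF p x (t - 1) := pbPMF_nonneg hp x _
  by_cases hmass : q / 4 * pbPMF p x t ≤ pbPMF p x (t - 1)
  · have : b₀ * pbPMF p x t ≤ (1 - b₀ - b₁) * pbPMF p x (t - 1) := by nlinarith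
    linarith
  · have htail : pbCDF p x (t - 1) ≤ q / 4 :=
      (pbCDF_sub_one_le_mul hp x hft (not_le.1 hmass).le).trans
        (mul_le_of_le_one_right (by positivity) (pbCDF_le_one hp x t))
    have : b₀ * pbPMF p x t ≤ q / 8 := by nlinarith
    nlinarith

lemma pbQuantile_spec (p : Fin k → ℝ) (x : Fin k → ℕ) {q : ℝ}
    (hq0 : 0 < q) (hq1 : q ≤ 1) :
    pbCDF p x (pbQuantile p x q - 1) < q ∧ q ≤ pbCDF p x (pbQuantile p x q) := by
  have hne : {t : ℤ | q ≤ pbCDF p x t}.Nonempty := ⟨_, (pbCDF_of_ge p x le_rfl).symm ▸ hq1⟩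
  have hbdd : BddBelow {t : ℤ | q ≤ pbCDF p x t} := ⟨0, fun t ht => not_lt.1 fun hneg =>
    ((show q ≤ pbCDF p x t from ht).trans_eq (pbCDF_of_neg p x hneg)).not_gt hq0⟩
  refine ⟨not_le.1 fun h => ?_, Int.csInf_mem hne hbdd⟩
  have := csInf_le hbdd h
  rw [pbQuantile] at this
  omega

lemma lt_pbQuantile {p : Fin k → ℝ} (hp : ∀ i, p i ∈ Set.Icc (0 : ℝ) 1)
    (x : Fin k → ℕ) {q : ℝ} (hq1 : q ≤ 1) {t : ℤ} (ht : pbCDF p x t < q) : t < pbQuantile p x q :=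
  Int.lt_iff_add_one_le.2 <| le_csInf ⟨_, (pbCDF_of_ge p x le_rfl).symm ▸ hq1⟩ fun _ hu =>
    Int.lt_iff_add_one_le.1 <| not_le.1 fun hut => (ht.trans_le hu).not_ge (pbCDF_mono hp x hut)

end PoissonBinomial

theorem quantile_separation_general {k : ℕ} (v p : Fin k → ℝ)
    (hp : ∀ j, 0 < p j ∧ p j < 1)
    (hv : ∀ j, 0 < v j ∧ v j < p j)
    (j : Fin k) :
    ∃ δs m0 : ℕ, ∀ x : Fin k → ℕ, m0 ≤ ∑ n, x n →
      pbQuantile p x (1 - v j / p j) + 1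
        ≤ pbQuantile p (fun m => x m + if m = j then δs else 0) (1 - v j / p j) := by
  set q := 1 - v j / p j
  have hq0 : 0 < q := by
    have := (div_lt_one (hp j).1).2 (hv j).2
    linarith
  have hq1 : q ≤ 1 := by
    have := div_pos (hv j).1 (hp j).1
    linarith
  have hp' : ∀ i, p i ∈ Set.Icc (0 : ℝ) 1 := fun i => ⟨(hp i).1.le, (hp i).2.le⟩
  obtain ⟨d, hd⟩ := ((tendsto_binomPMF_zero_add_one (hp j).1 (hp j).2.le).eventually
    (ge_mem_nhds (by positivity : (0 : ℝ) < q / 8))).exists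
  refine ⟨d + 1, 0, fun x _ => ?_⟩
  have hshift : (fun m => x m + if m = j then d + 1 else 0) = x + Pi.single j (d + 1) := by
    ext m
    simp [Pi.single_apply]
  obtain ⟨hlt, hle⟩ := pbQuantile_spec p x hq0 hq1
  rw [hshift, Int.add_one_le_iff]
  exact lt_pbQuantile hp' _ hq1 (pbCDF_add_single_lt hp' x j hq0 hd hlt hle)

/-- **Claim 1 (quantile separation).**  Fix a type `j`.  There are constants
`δ*` and `m0` (depending only on `j`, `k`, `v`, `p`) such that for every `x` with
`Σ_n x_n ≥ m0`, with `Z := S(x)` and `Y := S(x + δ*·e_j)`,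
`F_Y^{-1}(q̄_j) − F_Z^{-1}(q̄_j) ≥ 1`, where `q̄_j = 1 − v_j/p_j`. -/
theorem quantile_separation {k : ℕ} (v p : Fin k → ℝ)
    (hk : 1 ≤ k)
    (hp : ∀ j, 0 < p j ∧ p j < 1)
    (hrat : ∀ j, ∃ q : ℚ, p j = (q : ℝ))
    (hv : ∀ j, 0 < v j ∧ v j < p j)
    (j : Fin k) :
    ∃ δs m0 : ℕ, ∀ x : Fin k → ℕ, m0 ≤ ∑ n, x n →
      pbQuantile p x (1 - v j / p j) + 1
        ≤ pbQuantile p (fun m => x m + if m = j then δs else 0) (1 - v j / p j) :=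
  quantile_separation_general v p hp hv j
end

section
/- For every capacity B ∈ ℕ, every demand bounds n ∈ ℕ^k, and every past accepted counts y ∈ ℕ^k, there exists a globally optimal solution x* of the offline problem (i.e., a feasible x* maximizing f over all feasible x) that is locally optimal at every type j ∈ {1,...,k}. -/
open Finset

private lemma objFn_update_diff {k : ℕ} (v p : Fin k → ℝ) (B : ℕ) (y x : Fin k → ℕ)
    (j : Fin k) (z : ℕ) :
    objFn v p B y (Function.update x j z) - objFn v p B y x
      = ((z : ℝ) * v j - VB p B (fun i => y i + Function.update x j z i))
        - ((x j : ℝ) * v j - VB p B (fun i => y i + x i)) := by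
  unfold objFn
  have h1 : (fun i => v i * ((y i : ℝ) + ((Function.update x j z i : ℕ) : ℝ)))
      = Function.update (fun i => v i * ((y i : ℝ) + (x i : ℝ))) j
          (v j * ((y j : ℝ) + (z : ℝ))) := by
    funext i
    by_cases h : i = j
    · subst h; simp
    · simp [Function.update_of_ne h]
  have h2 : ∑ i, v i * ((y i : ℝ) + ((Function.update x j z i : ℕ) : ℝ))
      = v j * ((y j : ℝ) + (z : ℝ))
        + ∑ i ∈ Finset.univ \ {j}, v i * ((y i : ℝ) + (x i : ℝ)) := by
    rw [h1, Finset.sum_update_of_mem (Finset.mem_univ j)]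
  have h3 : ∑ i, v i * ((y i : ℝ) + (x i : ℝ))
      = v j * ((y j : ℝ) + (x j : ℝ))
        + ∑ i ∈ Finset.univ \ {j}, v i * ((y i : ℝ) + (x i : ℝ)) := by
    rw [Finset.sum_eq_add_sum_sdiff_singleton_of_mem (Finset.mem_univ j)]
  rw [h2, h3]
  ring

/-- **Claim 4 (existence of a locally optimal global optimum).**  For every `B`,
bounds `n`, and past counts `y`, there is a globally optimal solution of the
offline problem that is locally optimal at every type. -/
theorem exists_locally_optimal_global_optimum {k : ℕ} (v p : Fin k → ℝ)
    (hk : 1 ≤ k)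
    (hp : ∀ j, 0 < p j ∧ p j < 1)
    (hrat : ∀ j, ∃ q : ℚ, p j = (q : ℝ))
    (hv : ∀ j, 0 < v j ∧ v j < p j)
    (B : ℕ) (n y : Fin k → ℕ) :
    ∃ xs : Fin k → ℕ, Feasible n xs ∧
      (∀ x, Feasible n x → objFn v p B y x ≤ objFn v p B y xs) ∧
      ∀ j, LocallyOpt v p B n y xs j := by
  classical
  set S := Fintype.piFinset (fun j => Finset.range (n j + 1)) with hS
  have hmemS : ∀ x : Fin k → ℕ, x ∈ S ↔ Feasible n x := by
    intro x
    simp [hS, Fintype.mem_piFinset, Finset.mem_range, Nat.lt_succ_iff, Feasible]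
  have hSne : S.Nonempty := ⟨fun _ => 0, (hmemS _).2 (fun j => Nat.zero_le _)⟩
  obtain ⟨b, hbS, hbmax⟩ := S.exists_max_image (objFn v p B y) hSne
  set A := S.filter (fun x => objFn v p B y b ≤ objFn v p B y x) with hA
  have hbA : b ∈ A := Finset.mem_filter.2 ⟨hbS, le_refl _⟩
  obtain ⟨xs, hxsA, hxsmax⟩ := A.exists_max_image (fun x => ∑ j, x j) ⟨b, hbA⟩
  obtain ⟨hxsS, hxsobj⟩ := Finset.mem_filter.1 hxsA
  have hfeas : Feasible n xs := (hmemS _).1 hxsS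
  have hglob : ∀ x, Feasible n x → objFn v p B y x ≤ objFn v p B y xs := by
    intro x hx
    exact le_trans (hbmax x ((hmemS _).2 hx)) hxsobj
  refine ⟨xs, hfeas, hglob, ?_⟩
  intro j z hz
  set x' := Function.update xs j z with hx'
  have hx'feas : Feasible n x' := by
    intro i
    by_cases h : i = j
    · subst h; simpa [hx'] using hz
    · simpa [hx', Function.update_of_ne h] using hfeas i
  have hle : objFn v p B y x' ≤ objFn v p B y xs := hglob x' hx'feas
  have hdiff := objFn_update_diff v p B y xs j z
  constructor
  · linarith
  · intro hlt
    by_contra hcon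
    push_neg at hcon
    have heq : objFn v p B y xs ≤ objFn v p B y x' := by linarith
    have hx'A : x' ∈ A :=
      Finset.mem_filter.2 ⟨(hmemS _).2 hx'feas, le_trans hxsobj heq⟩
    have hsum := hxsmax x' hx'A
    have e1 : ∑ i, x' i = z + ∑ i ∈ Finset.univ \ {j}, xs i :=
      Finset.sum_update_of_mem (Finset.mem_univ j) xs z
    have e2 : ∑ i, xs i = xs j + ∑ i ∈ Finset.univ \ {j}, xs i :=
      Finset.sum_eq_add_sum_sdiff_singleton_of_mem (Finset.mem_univ j) _
    simp only [e1, e2] at hsum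
    omega
end

section
/- Consider the two-type instance with v_1 = 1/4, p_1 = 1/2 and v_2 = 1/2 − 1/T, p_2 = 1, capacity B = T/6, for T a positive integer divisible by 6. For demand bounds N = (N_1, N_2) ∈ ℕ² define, for x ∈ ℕ² with x ≤ N, the objective f(x) := v_1·x_1 + v_2·x_2 − E[(Binomial(x_1, 1/2) + x_2 − T/6)^+], and call x an index solution if x_2 = 0 or x_1 = N_1. Then there exist constants c > 0 and T_0 such that for all T ≥ T_0 divisible by 6 and all N with N_1 ≥ 2T/5 and N_2 ≥ T/6: the maximum of f over index solutions x ≤ N is at most f((0, T/6)) − c·√T. In particular, the optimal index solution falls short of the offline optimum by at least c·√T. -/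
/-- Objective for the two-type instance with `v₁ = 1/4, p₁ = 1/2`,
`v₂ = 1/2 − 1/T, p₂ = 1`, capacity `B = T/6`:
`f(x₁,x₂) = v₁x₁ + v₂x₂ − E[(Binomial(x₁,1/2) + x₂ − T/6)^+]`. -/
noncomputable def twoTypeObj (T x1 x2 : ℕ) : ℝ :=
  (1 / 4 : ℝ) * (x1 : ℝ) + ((1 / 2 : ℝ) - 1 / (T : ℝ)) * (x2 : ℝ)
    - ∑ s ∈ Finset.range (x1 + 1),
        binomPMF (1 / 2) x1 s * max ((s : ℝ) + (x2 : ℝ) - (T : ℝ) / 6) 0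

open Finset

lemma pascal_sum (g : ℝ → ℝ) (n : ℕ) :
    ∑ s ∈ range (n+2), ((n+1).choose s : ℝ) * g (2*s - ((n:ℝ)+1))
      = ∑ s ∈ range (n+1), (n.choose s : ℝ) * g (2*s - (n:ℝ) - 1)
      + ∑ s ∈ range (n+1), (n.choose s : ℝ) * g (2*s - (n:ℝ) + 1) := by
  set h : ℕ → ℝ := fun j => (n.choose j : ℝ) * g (2*j - (n:ℝ) - 1) with hh
  have peel : ∑ s ∈ range (n+2), ((n+1).choose s : ℝ) * g (2*s - ((n:ℝ)+1))
      = ∑ i ∈ range (n+1), ((n+1).choose (i+1) : ℝ) * g (2*(i+1:ℕ) - ((n:ℝ)+1))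
        + ((n+1).choose 0 : ℝ) * g (2*(0:ℕ) - ((n:ℝ)+1)) :=
    Finset.sum_range_succ' _ (n+1)
  have h1 : ∀ i ∈ range (n+1),
      ((n+1).choose (i+1) : ℝ) * g (2*(i+1:ℕ) - ((n:ℝ)+1))
        = (n.choose i : ℝ) * g (2*i - (n:ℝ) + 1) + h (i+1) := by
    intro i _
    rw [Nat.choose_succ_succ, hh]
    have harg : (2*((i:ℝ)+1) - ((n:ℝ)+1)) = 2*(i:ℝ) - (n:ℝ) + 1 := by ring
    have harg2 : (2*((i:ℝ)+1) - (n:ℝ) - 1) = 2*(i:ℝ) - (n:ℝ) + 1 := by ring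
    push_cast
    rw [harg, harg2]
    ring
  have key : ∑ j ∈ range (n+2), h j = ∑ i ∈ range (n+1), h (i+1) + h 0 :=
    Finset.sum_range_succ' _ (n+1)
  have top : ∑ j ∈ range (n+2), h j = ∑ j ∈ range (n+1), h j + h (n+1) :=
    Finset.sum_range_succ _ (n+1)
  have htopz : h (n+1) = 0 := by
    simp [hh, Nat.choose_succ_self]
  have hz : ((n+1).choose 0 : ℝ) * g (2*(0:ℕ) - ((n:ℝ)+1)) = h 0 := by
    simp [hh]
    ring_nf
  rw [peel, Finset.sum_congr rfl h1, Finset.sum_add_distrib, hz]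
  have : ∑ i ∈ range (n+1), h (i+1) + h 0 = ∑ j ∈ range (n+1), h j := by
    rw [← key, top, htopz]; ring
  linarith [this]

lemma mom0 (n : ℕ) : ∑ s ∈ range (n+1), (n.choose s : ℝ) = 2^n := by
  rw [← Nat.cast_sum, Nat.sum_range_choose]; push_cast; ring

lemma mom1 (n : ℕ) : ∑ s ∈ range (n+1), (n.choose s : ℝ) * (2*s - (n:ℝ)) = 0 := by
  induction n with
  | zero => simp
  | succ n ih =>
    have := pascal_sum (fun t => t) n
    have e : ∑ s ∈ range (n+1+1), ((n+1).choose s : ℝ) * (2*s - ((n:ℝ)+1))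
        = ∑ s ∈ range (n+2), ((n+1).choose s : ℝ) * (2*s - ((n:ℝ)+1)) := rfl
    push_cast
    rw [e, this]
    have c1 : ∀ s ∈ range (n+1), (n.choose s : ℝ) * (2*s - (n:ℝ) - 1)
        + (n.choose s : ℝ) * (2*s - (n:ℝ) + 1) = 2 * ((n.choose s : ℝ) * (2*s - (n:ℝ))) := by
      intro s _; ring
    rw [← Finset.sum_add_distrib, Finset.sum_congr rfl c1, ← Finset.mul_sum, ih]
    ring

lemma mom2 (n : ℕ) : ∑ s ∈ range (n+1), (n.choose s : ℝ) * (2*s - (n:ℝ))^2 = (n:ℝ) * 2^n := by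
  induction n with
  | zero => simp
  | succ n ih =>
    have := pascal_sum (fun t => t^2) n
    have e : ∑ s ∈ range (n+1+1), ((n+1).choose s : ℝ) * (2*s - ((n:ℝ)+1))^2
        = ∑ s ∈ range (n+2), ((n+1).choose s : ℝ) * (2*s - ((n:ℝ)+1))^2 := rfl
    push_cast
    rw [e, this]
    have c1 : ∀ s ∈ range (n+1), (n.choose s : ℝ) * (2*s - (n:ℝ) - 1)^2
        + (n.choose s : ℝ) * (2*s - (n:ℝ) + 1)^2
        = 2 * ((n.choose s : ℝ) * (2*s - (n:ℝ))^2) + 2 * (n.choose s : ℝ) := by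
      intro s _; ring
    rw [← Finset.sum_add_distrib, Finset.sum_congr rfl c1, Finset.sum_add_distrib,
      ← Finset.mul_sum, ← Finset.mul_sum, ih, mom0]
    ring

lemma mom4 (n : ℕ) : ∑ s ∈ range (n+1), (n.choose s : ℝ) * (2*s - (n:ℝ))^4
    = (3*(n:ℝ)^2 - 2*n) * 2^n := by
  induction n with
  | zero => simp
  | succ n ih =>
    have := pascal_sum (fun t => t^4) n
    have e : ∑ s ∈ range (n+1+1), ((n+1).choose s : ℝ) * (2*s - ((n:ℝ)+1))^4
        = ∑ s ∈ range (n+2), ((n+1).choose s : ℝ) * (2*s - ((n:ℝ)+1))^4 := rfl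
    push_cast
    rw [e, this]
    have c1 : ∀ s ∈ range (n+1), (n.choose s : ℝ) * (2*s - (n:ℝ) - 1)^4
        + (n.choose s : ℝ) * (2*s - (n:ℝ) + 1)^4
        = 2 * ((n.choose s : ℝ) * (2*s - (n:ℝ))^4)
          + 12 * ((n.choose s : ℝ) * (2*s - (n:ℝ))^2) + 2 * (n.choose s : ℝ) := by
      intro s _; ring
    rw [← Finset.sum_add_distrib, Finset.sum_congr rfl c1, Finset.sum_add_distrib,
      Finset.sum_add_distrib, ← Finset.mul_sum, ← Finset.mul_sum, ← Finset.mul_sum,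
      ih, mom2, mom0]
    ring
noncomputable def W (n s : ℕ) : ℝ := (n.choose s : ℝ) * (1/2:ℝ)^n

lemma W_nonneg (n s : ℕ) : 0 ≤ W n s := by unfold W; positivity

lemma sum_W (n : ℕ) : ∑ s ∈ range (n+1), W n s = 1 := by
  unfold W
  rw [← Finset.sum_mul, mom0, ← mul_pow]
  norm_num

lemma sum_W_t (n : ℕ) : ∑ s ∈ range (n+1), W n s * (2*s - (n:ℝ)) = 0 := by
  unfold W
  have e : ∀ s ∈ range (n+1), (n.choose s : ℝ) * (1/2:ℝ)^n * (2*s - (n:ℝ))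
      = ((n.choose s : ℝ) * (2*s - (n:ℝ))) * (1/2:ℝ)^n := by intro s _; ring
  rw [Finset.sum_congr rfl e, ← Finset.sum_mul, mom1, zero_mul]

lemma sum_W_t2 (n : ℕ) : ∑ s ∈ range (n+1), W n s * (2*s - (n:ℝ))^2 = (n:ℝ) := by
  unfold W
  have e : ∀ s ∈ range (n+1), (n.choose s : ℝ) * (1/2:ℝ)^n * (2*s - (n:ℝ))^2
      = ((n.choose s : ℝ) * (2*s - (n:ℝ))^2) * (1/2:ℝ)^n := by intro s _; ring
  rw [Finset.sum_congr rfl e, ← Finset.sum_mul, mom2, mul_assoc, ← mul_pow]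
  norm_num

lemma sum_W_t4 (n : ℕ) : ∑ s ∈ range (n+1), W n s * (2*s - (n:ℝ))^4
    = 3*(n:ℝ)^2 - 2*n := by
  unfold W
  have e : ∀ s ∈ range (n+1), (n.choose s : ℝ) * (1/2:ℝ)^n * (2*s - (n:ℝ))^4
      = ((n.choose s : ℝ) * (2*s - (n:ℝ))^4) * (1/2:ℝ)^n := by intro s _; ring
  rw [Finset.sum_congr rfl e, ← Finset.sum_mul, mom4, mul_assoc, ← mul_pow]
  norm_num

lemma sum_W_s (n : ℕ) : ∑ s ∈ range (n+1), W n s * s = (n:ℝ)/2 := by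
  have e : ∀ s ∈ range (n+1), W n s * s
      = (W n s * (2*s - (n:ℝ)) + (n:ℝ) * W n s)/2 := by intro s _; ring
  rw [Finset.sum_congr rfl e, ← Finset.sum_div, Finset.sum_add_distrib,
    sum_W_t, ← Finset.mul_sum, sum_W]
  ring

lemma absdev (n : ℕ) (hn : 1 ≤ n) :
    Real.sqrt ((n:ℝ)/3) ≤ ∑ s ∈ range (n+1), W n s * |2*s - (n:ℝ)| := by
  set A := ∑ s ∈ range (n+1), W n s * |2*s - (n:ℝ)| with hA
  set C3 := ∑ s ∈ range (n+1), W n s * |2*s - (n:ℝ)|^3 with hC3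
  have hA0 : 0 ≤ A := Finset.sum_nonneg (fun s _ => mul_nonneg (W_nonneg n s) (abs_nonneg _))
  have hC30 : 0 ≤ C3 := Finset.sum_nonneg (fun s _ => mul_nonneg (W_nonneg n s) (by positivity))
  have cs1 : ((n:ℝ))^2 ≤ A * C3 := by
    have h := Finset.sum_mul_sq_le_sq_mul_sq (range (n+1))
      (fun s => Real.sqrt (W n s * |2*s - (n:ℝ)|))
      (fun s => Real.sqrt (W n s * |2*s - (n:ℝ)|^3))
    have e1 : ∀ s ∈ range (n+1),
        Real.sqrt (W n s * |2*s - (n:ℝ)|) * Real.sqrt (W n s * |2*s - (n:ℝ)|^3)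
          = W n s * (2*s - (n:ℝ))^2 := by
      intro s _
      rw [← Real.sqrt_mul (mul_nonneg (W_nonneg n s) (by positivity))]
      have h4 : |2*s - (n:ℝ)| * |2*s - (n:ℝ)|^3 = (2*s - (n:ℝ))^4 := by
        rcases abs_cases (2*s - (n:ℝ)) with ⟨h,_⟩|⟨h,_⟩ <;> rw [h] <;> ring
      have : (W n s * |2*s - (n:ℝ)|) * (W n s * |2*s - (n:ℝ)|^3)
          = (W n s * (2*s - (n:ℝ))^2)^2 := by linear_combination (W n s)^2 * h4
      rw [this, Real.sqrt_sq (mul_nonneg (W_nonneg n s) (by positivity))]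
    have e2 : ∀ s ∈ range (n+1),
        Real.sqrt (W n s * |2*s - (n:ℝ)|)^2 = W n s * |2*s - (n:ℝ)| :=
      fun s _ => Real.sq_sqrt (mul_nonneg (W_nonneg n s) (by positivity))
    have e3 : ∀ s ∈ range (n+1),
        Real.sqrt (W n s * |2*s - (n:ℝ)|^3)^2 = W n s * |2*s - (n:ℝ)|^3 :=
      fun s _ => Real.sq_sqrt (mul_nonneg (W_nonneg n s) (by positivity))
    rw [Finset.sum_congr rfl e1, Finset.sum_congr rfl e2, Finset.sum_congr rfl e3,
      sum_W_t2] at h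
    exact h
  have cs2 : C3^2 ≤ (n:ℝ) * (3*(n:ℝ)^2 - 2*n) := by
    have h := Finset.sum_mul_sq_le_sq_mul_sq (range (n+1))
      (fun s => Real.sqrt (W n s * (2*s - (n:ℝ))^2))
      (fun s => Real.sqrt (W n s * (2*s - (n:ℝ))^4))
    have e1 : ∀ s ∈ range (n+1),
        Real.sqrt (W n s * (2*s - (n:ℝ))^2) * Real.sqrt (W n s * (2*s - (n:ℝ))^4)
          = W n s * |2*s - (n:ℝ)|^3 := by
      intro s _
      rw [← Real.sqrt_mul (mul_nonneg (W_nonneg n s) (by positivity))]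
      have h6 : ((2*s - (n:ℝ))^2) * ((2*s - (n:ℝ))^4) = (|2*s - (n:ℝ)|^3)^2 := by
        have hh : (|2*s - (n:ℝ)|^3)^2 = (2*s - (n:ℝ))^6 := by
          rcases abs_cases (2*s - (n:ℝ)) with ⟨h,_⟩|⟨h,_⟩ <;> rw [h] <;> ring
        rw [hh]; ring
      have : (W n s * (2*s - (n:ℝ))^2) * (W n s * (2*s - (n:ℝ))^4)
          = (W n s * |2*s - (n:ℝ)|^3)^2 := by linear_combination (W n s)^2 * h6
      rw [this, Real.sqrt_sq (mul_nonneg (W_nonneg n s) (by positivity))]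
    have e2 : ∀ s ∈ range (n+1),
        Real.sqrt (W n s * (2*s - (n:ℝ))^2)^2 = W n s * (2*s - (n:ℝ))^2 :=
      fun s _ => Real.sq_sqrt (mul_nonneg (W_nonneg n s) (by positivity))
    have e3 : ∀ s ∈ range (n+1),
        Real.sqrt (W n s * (2*s - (n:ℝ))^4)^2 = W n s * (2*s - (n:ℝ))^4 :=
      fun s _ => Real.sq_sqrt (mul_nonneg (W_nonneg n s) (by positivity))
    rw [Finset.sum_congr rfl e1, Finset.sum_congr rfl e2, Finset.sum_congr rfl e3,
      sum_W_t2, sum_W_t4] at h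
    exact h
  have hn1 : (1:ℝ) ≤ (n:ℝ) := by exact_mod_cast hn
  have key : (n:ℝ)/3 ≤ A^2 := by
    have h1 : ((n:ℝ)^2)^2 ≤ (A*C3)^2 := by
      apply pow_le_pow_left₀ (by positivity) cs1
    have h2 : (A*C3)^2 = A^2 * C3^2 := by ring
    have h3 : A^2 * C3^2 ≤ A^2 * ((n:ℝ) * (3*(n:ℝ)^2 - 2*n)) :=
      mul_le_mul_of_nonneg_left cs2 (sq_nonneg A)
    nlinarith [h1, h2, h3, sq_nonneg A]
  calc Real.sqrt ((n:ℝ)/3) ≤ Real.sqrt (A^2) := Real.sqrt_le_sqrt key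
    _ = A := Real.sqrt_sq hA0

lemma plus_eq (a : ℝ) : max a 0 = (|a| + a)/2 := by
  rcases le_total 0 a with h|h
  · rw [abs_of_nonneg h, max_eq_left h]; ring
  · rw [abs_of_nonpos h, max_eq_right h]; ring

lemma plus_lip (x a b : ℝ) : max (x - a) 0 ≤ max (x - b) 0 + |a - b| := by
  apply max_le
  · have h1 : x - b ≤ max (x - b) 0 := le_max_left _ _
    have h2 : b - a ≤ |a - b| := by rw [abs_sub_comm]; exact le_abs_self _
    linarith
  · positivity

lemma E0 (n : ℕ) (a b : ℝ) :
    0 ≤ ∑ s ∈ range (n+1), W n s * max ((s:ℝ) + a - b) 0 :=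
  Finset.sum_nonneg fun s _ => mul_nonneg (W_nonneg n s) (le_max_right _ _)

lemma E1 (n : ℕ) (a b : ℝ) :
    (n:ℝ)/2 + a - b ≤ ∑ s ∈ range (n+1), W n s * max ((s:ℝ) + a - b) 0 := by
  have pt : ∀ s ∈ range (n+1), W n s * ((s:ℝ) + a - b)
      ≤ W n s * max ((s:ℝ) + a - b) 0 :=
    fun s _ => mul_le_mul_of_nonneg_left (le_max_left _ _) (W_nonneg n s)
  have hsum : ∑ s ∈ range (n+1), W n s * ((s:ℝ) + a - b) = (n:ℝ)/2 + a - b := by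
    have e : ∀ s ∈ range (n+1), W n s * ((s:ℝ) + a - b)
        = W n s * (s:ℝ) + (a - b) * W n s := by intro s _; ring
    rw [Finset.sum_congr rfl e, Finset.sum_add_distrib, sum_W_s, ← Finset.mul_sum, sum_W]
    ring
  calc (n:ℝ)/2 + a - b = ∑ s ∈ range (n+1), W n s * ((s:ℝ) + a - b) := hsum.symm
    _ ≤ _ := Finset.sum_le_sum pt

lemma Eplus (n : ℕ) : ∑ s ∈ range (n+1), W n s * max ((s:ℝ) - (n:ℝ)/2) 0
    = (∑ s ∈ range (n+1), W n s * |2*s - (n:ℝ)|)/4 := by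
  have e : ∀ s ∈ range (n+1), W n s * max ((s:ℝ) - (n:ℝ)/2) 0
      = (W n s * |2*s - (n:ℝ)| + W n s * (2*s - (n:ℝ)))/4 := by
    intro s _
    rw [plus_eq]
    have h1 : |(s:ℝ) - (n:ℝ)/2| = |2*s - (n:ℝ)|/2 := by
      rw [show (s:ℝ) - (n:ℝ)/2 = (2*s - (n:ℝ))/2 by ring, abs_div]
      norm_num
    rw [h1]; ring
  rw [Finset.sum_congr rfl e, ← Finset.sum_div, Finset.sum_add_distrib, sum_W_t]
  ring

lemma E2 (n : ℕ) (hn : 1 ≤ n) (a b : ℝ) :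
    Real.sqrt ((n:ℝ)/3)/4 - |(n:ℝ)/2 + a - b|
      ≤ ∑ s ∈ range (n+1), W n s * max ((s:ℝ) + a - b) 0 := by
  have pt : ∀ s ∈ range (n+1),
      W n s * (max ((s:ℝ) - (n:ℝ)/2) 0 - |(n:ℝ)/2 + a - b|)
        ≤ W n s * max ((s:ℝ) + a - b) 0 := by
    intro s _
    apply mul_le_mul_of_nonneg_left _ (W_nonneg n s)
    have h := plus_lip ((s:ℝ)) ((n:ℝ)/2) (b - a)
    rw [show (s:ℝ) - (b - a) = (s:ℝ) + a - b by ring,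
      show (n:ℝ)/2 - (b - a) = (n:ℝ)/2 + a - b by ring] at h
    linarith
  have hsum : ∑ s ∈ range (n+1),
      W n s * (max ((s:ℝ) - (n:ℝ)/2) 0 - |(n:ℝ)/2 + a - b|)
      = (∑ s ∈ range (n+1), W n s * |2*s - (n:ℝ)|)/4 - |(n:ℝ)/2 + a - b| := by
    have e : ∀ s ∈ range (n+1),
        W n s * (max ((s:ℝ) - (n:ℝ)/2) 0 - |(n:ℝ)/2 + a - b|)
        = W n s * max ((s:ℝ) - (n:ℝ)/2) 0 - |(n:ℝ)/2 + a - b| * W n s := by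
      intro s _; ring
    rw [Finset.sum_congr rfl e, Finset.sum_sub_distrib, Eplus, ← Finset.mul_sum, sum_W]
    ring
  have habs := absdev n hn
  calc Real.sqrt ((n:ℝ)/3)/4 - |(n:ℝ)/2 + a - b|
      ≤ (∑ s ∈ range (n+1), W n s * |2*s - (n:ℝ)|)/4 - |(n:ℝ)/2 + a - b| := by linarith
    _ = ∑ s ∈ range (n+1), W n s * (max ((s:ℝ) - (n:ℝ)/2) 0 - |(n:ℝ)/2 + a - b|) :=
        hsum.symm
    _ ≤ _ := Finset.sum_le_sum pt

lemma pmf_to_W (n : ℕ) (a b : ℝ) :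
    ∑ s ∈ range (n+1), binomPMF (1/2) n s * max ((s:ℝ) + a - b) 0
      = ∑ s ∈ range (n+1), W n s * max ((s:ℝ) + a - b) 0 := by
  apply Finset.sum_congr rfl
  intro s hs
  have hs' : s ≤ n := Nat.lt_succ_iff.mp (Finset.mem_range.mp hs)
  unfold binomPMF W
  rw [show (1 - (1:ℝ)/2) = 1/2 by norm_num]
  have key : (1/2:ℝ)^s * (1/2:ℝ)^(n-s) = (1/2:ℝ)^n := by
    rw [← pow_add, Nat.add_sub_cancel' hs']
  linear_combination ((n.choose s : ℝ)) * (max ((s:ℝ)+a-b) 0) * key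

set_option maxHeartbeats 1000000 in
/-- **Index policies can lose `Ω(√T)` (Appendix C.2).**  In the two-type instance
above there are constants `c > 0` and `T₀` such that for all `T ≥ T₀` divisible
by `6` and all demand bounds `N` with `N₁ ≥ 2T/5` and `N₂ ≥ T/6`, every index
solution `x ≤ N` (i.e. `x₂ = 0` or `x₁ = N₁`) satisfies
`f(x) ≤ f(0, T/6) − c·√T`. -/
theorem clairvoyant_index_sqrt_loss :
    ∃ c : ℝ, 0 < c ∧ ∃ T0 : ℕ, ∀ T : ℕ, T0 ≤ T → 6 ∣ T →
      ∀ N1 N2 : ℕ, 2 * T ≤ 5 * N1 → T ≤ 6 * N2 →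
        ∀ x1 x2 : ℕ, x1 ≤ N1 → x2 ≤ N2 → (x2 = 0 ∨ x1 = N1) →
          twoTypeObj T x1 x2 ≤ twoTypeObj T 0 (T / 6) - c * Real.sqrt (T : ℝ) := by
  refine ⟨1/100, by norm_num, 10000, ?_⟩
  intro T hT h6 N1 N2 hN1 hN2 x1 x2 hx1N hx2N hcase
  have hT' : (10000:ℝ) ≤ (T:ℝ) := by exact_mod_cast hT
  have hTpos : (0:ℝ) < (T:ℝ) := by linarith
  have hs2 : (Real.sqrt (T:ℝ))^2 = (T:ℝ) := Real.sq_sqrt hTpos.le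
  have hs0 : (0:ℝ) ≤ Real.sqrt (T:ℝ) := Real.sqrt_nonneg _
  set sq := Real.sqrt (T:ℝ) with hsq
  have hs100 : (100:ℝ) ≤ sq := by
    have h1 : Real.sqrt 10000 ≤ sq := Real.sqrt_le_sqrt hT'
    have h2 : Real.sqrt 10000 = 100 := by
      rw [show (10000:ℝ) = 100^2 by norm_num, Real.sqrt_sq (by norm_num)]
    linarith
  have hsT : sq ≤ (T:ℝ)/100 := by nlinarith [hs2, hs100, hs0]
  have hT6 : ((T/6 : ℕ):ℝ) = (T:ℝ)/6 := by
    obtain ⟨k, rfl⟩ := h6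
    rw [Nat.mul_div_cancel_left k (by norm_num)]
    push_cast; ring
  have hTne : (T:ℝ) ≠ 0 := ne_of_gt hTpos
  have hRHS : twoTypeObj T 0 (T/6) = (T:ℝ)/12 - 1/6 := by
    unfold twoTypeObj binomPMF
    rw [Finset.sum_range_one]
    simp only [Nat.cast_zero, Nat.choose_self, Nat.cast_one, pow_zero, Nat.sub_zero,
      hT6]
    rw [show (0:ℝ) + (T:ℝ)/6 - (T:ℝ)/6 = 0 by ring, max_self, mul_zero]
    field_simp
    ring
  rw [hRHS]
  rcases hcase with rfl | rfl
  · -- x2 = 0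
    unfold twoTypeObj
    simp only [Nat.cast_zero]
    rw [pmf_to_W x1 0 ((T:ℝ)/6)]
    set Ex := ∑ s ∈ range (x1+1), W x1 s * max ((s:ℝ) + 0 - (T:ℝ)/6) 0 with hEx
    rcases le_or_gt ((x1:ℝ)) ((T:ℝ)/3 - 2/3 - sq/25) with h1|h1
    · have hE : 0 ≤ Ex := E0 x1 0 ((T:ℝ)/6)
      rw [mul_zero, add_zero]
      linarith
    · rcases le_or_gt ((T:ℝ)/3 + 2/3 + sq/25) (x1:ℝ) with h2|h2
      · have hE : (x1:ℝ)/2 + 0 - (T:ℝ)/6 ≤ Ex := E1 x1 0 ((T:ℝ)/6)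
        rw [mul_zero, add_zero]
        linarith
      · have hx1pos : 1 ≤ x1 := by
          by_contra hc
          push_neg at hc
          have hx0 : x1 = 0 := by omega
          subst hx0
          simp only [Nat.cast_zero] at h1
          nlinarith [h1, hsT, hT', hs0]
        have hE : Real.sqrt ((x1:ℝ)/3)/4 - |(x1:ℝ)/2 + 0 - (T:ℝ)/6| ≤ Ex :=
          E2 x1 hx1pos 0 ((T:ℝ)/6)
        have habs : |(x1:ℝ)/2 + 0 - (T:ℝ)/6| ≤ 1/3 + sq/50 :=
          abs_le.mpr ⟨by linarith, by linarith⟩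
        have hx1T : (T:ℝ)/4 ≤ (x1:ℝ) := by linarith
        have hv0 : (0:ℝ) ≤ Real.sqrt ((T:ℝ)/12) := Real.sqrt_nonneg _
        have hv2 : (Real.sqrt ((T:ℝ)/12))^2 = (T:ℝ)/12 := Real.sq_sqrt (by positivity)
        set v := Real.sqrt ((T:ℝ)/12) with hv
        have hvu : v ≤ Real.sqrt ((x1:ℝ)/3) := Real.sqrt_le_sqrt (by linarith)
        have hv4 : sq/4 ≤ v := by nlinarith [hv2, hs2, hv0, hs0, hs100]
        rw [mul_zero, add_zero]
        linarith [hE, habs, hvu, hv4, h2, hs100]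
  · -- x1 = N1
    unfold twoTypeObj
    rw [pmf_to_W x1 ((x2:ℝ)) ((T:ℝ)/6)]
    set Ex := ∑ s ∈ range (x1+1), W x1 s * max ((s:ℝ) + (x2:ℝ) - (T:ℝ)/6) 0 with hEx
    have hE : (x1:ℝ)/2 + (x2:ℝ) - (T:ℝ)/6 ≤ Ex := E1 x1 ((x2:ℝ)) ((T:ℝ)/6)
    have hN1' : 2*(T:ℝ) ≤ 5*(x1:ℝ) := by exact_mod_cast hN1
    have hx2r : (0:ℝ) ≤ (x2:ℝ) := Nat.cast_nonneg _
    have hinv : (0:ℝ) ≤ 1/(T:ℝ) * (x2:ℝ) := by positivity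
    nlinarith [hE, hN1', hx2r, hinv, hsT, hT', hs0]
end
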